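/- Let f ∈ ℝ^p, A a real p×p matrix, F a real p×n matrix, Ω̂ a symmetric positive semidefinite real p×p matrix and λ̂ ∈ ℝ^p. Set M := Fᵀ Ω̂ F + I_n and ε := λ̂ − Ω̂ f. Then for every z ∈ ℝ^p: ∫_{ℝ^n} φ_n(ξ) · exp(−(1/2)·((f + A z + F ξ)ᵀ Ω̂ (f + A z + F ξ) − 2 λ̂ᵀ (f + A z + F ξ))) dξ = (det M)^{−1/2} · exp(−κ/2) · exp(−(1/2)·(zᵀ Ω' z − 2 λ'ᵀ z)), where Ω' = Aᵀ (I_p − Ω̂ F M⁻¹ Fᵀ) Ω̂ A, λ' = Aᵀ (I_p − Ω̂ F M⁻¹ Fᵀ) ε, and κ = fᵀ Ω̂ f − 2 λ̂ᵀ f − (Fᵀ ε)ᵀ M⁻¹ (Fᵀ ε). -/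

import Mathlib

open Matrix MeasureTheory Real

/-!
With `a := f + A z`, the Gaussian weight times the integrand is `exp` of a quadratic in `ξ` with
Hessian `M = Fᵀ Ω̂ F + I` (positive definite because `Ω̂` is positive semidefinite) and linear
coefficient `b = Fᵀ (λ̂ - Ω̂ a)`. Completing the square and substituting `ξ ↦ M^{1/2} ξ` gives
`∫ exp (-ξᵀ M ξ / 2 + bᵀ ξ) = (2π)^{n/2} (det M)^{-1/2} exp (bᵀ M⁻¹ b / 2)`. Expanding the
remaining exponent in `z` splits it into the constant `κ` and the quadratic form given by `Ω'`
and `λ'`.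
-/

namespace Matrix

variable {R m n : Type*} [CommRing R] [Fintype m] [Fintype n]

theorem IsSymm.dotProduct_mulVec_comm {B : Matrix m m R} (hB : B.IsSymm) (x y : m → R) :
    x ⬝ᵥ B *ᵥ y = y ⬝ᵥ B *ᵥ x := by
  simpa only [hB.eq] using dotProduct_transpose_mulVec B x y

theorem IsSymm.add_dotProduct_mulVec_add {B : Matrix m m R} (hB : B.IsSymm) (x y : m → R) :
    (x + y) ⬝ᵥ B *ᵥ (x + y) = x ⬝ᵥ B *ᵥ x + 2 * (x ⬝ᵥ B *ᵥ y) + y ⬝ᵥ B *ᵥ y := by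
  rw [mulVec_add, add_dotProduct, dotProduct_add, dotProduct_add, hB.dotProduct_mulVec_comm y x]
  ring

theorem IsSymm.sub_dotProduct_mulVec_sub {B : Matrix m m R} (hB : B.IsSymm) (x y : m → R) :
    (x - y) ⬝ᵥ B *ᵥ (x - y) = x ⬝ᵥ B *ᵥ x - 2 * (x ⬝ᵥ B *ᵥ y) + y ⬝ᵥ B *ᵥ y := by
  rw [mulVec_sub, sub_dotProduct, dotProduct_sub, dotProduct_sub, hB.dotProduct_mulVec_comm y x]
  ring

theorem IsSymm.dotProduct_mul_mul_mul_transpose_mulVec {Ω : Matrix m m R} (hΩ : Ω.IsSymm)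
    (F : Matrix m n R) (N : Matrix n n R) (x y : m → R) :
    x ⬝ᵥ (Ω * F * N * Fᵀ) *ᵥ y = (Fᵀ *ᵥ Ω *ᵥ x) ⬝ᵥ N *ᵥ (Fᵀ *ᵥ y) := by
  rw [← mulVec_mulVec, ← mulVec_mulVec, ← mulVec_mulVec, hΩ.dotProduct_mulVec_comm,
    dotProduct_comm, ← dotProduct_transpose_mulVec F, dotProduct_comm]

theorem PosSemidef.posDef_transpose_mul_mul_add_one [DecidableEq n] {Ω : Matrix m m ℝ}
    (hΩ : Ω.PosSemidef) (F : Matrix m n ℝ) : (Fᵀ * Ω * F + 1).PosDef := by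
  simpa only [conjTranspose_eq_transpose_of_trivial] using
    PosDef.posSemidef_add (hΩ.conjTranspose_mul_mul_same F) PosDef.one

end Matrix

section GaussianIntegral

variable {ι : Type*} [Fintype ι]

theorem integral_exp_neg_dotProduct_self_div_two :
    ∫ ξ : ι → ℝ, exp (-(ξ ⬝ᵥ ξ) / 2) = (2 * π) ^ ((Fintype.card ι : ℝ) / 2) := by
  have hprod : ∀ ξ : ι → ℝ, exp (-(ξ ⬝ᵥ ξ) / 2) = ∏ i, exp (-(1 / 2) * ξ i ^ 2) := by
    intro ξ
    rw [← exp_sum, dotProduct, ← Finset.sum_neg_distrib, Finset.sum_div]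
    congr 1
    exact Finset.sum_congr rfl fun i _ => by ring
  simp_rw [hprod]
  rw [integral_fintype_prod_volume_eq_pow (fun x : ℝ => exp (-(1 / 2) * x ^ 2)),
    integral_gaussian, show π / (1 / 2) = 2 * π by ring, sqrt_eq_rpow, ← rpow_natCast,
    ← rpow_mul (by positivity), one_div_mul_eq_div]

theorem integral_comp_mulVec [DecidableEq ι] {S : Matrix ι ι ℝ} (hS : S.det ≠ 0)
    (g : (ι → ℝ) → ℝ) :
    ∫ ξ : ι → ℝ, g (S *ᵥ ξ) = |S.det|⁻¹ * ∫ ξ : ι → ℝ, g ξ := by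
  have hdet : LinearMap.det (toLin' S) ≠ 0 := by rwa [LinearMap.det_toLin']
  let e := ((toLin' S).equivOfDetNeZero hdet).toContinuousLinearEquiv.toHomeomorph
  have hmap : Measure.map e volume = ENNReal.ofReal |S.det|⁻¹ • volume := by
    rw [← abs_inv, ← Real.map_matrix_volume_pi_eq_smul_volume_pi hS]
    rfl
  change ∫ ξ, g (e ξ) = _
  rw [← e.measurableEmbedding.integral_map, hmap, integral_smul_measure, smul_eq_mul,
    ENNReal.toReal_ofReal (by positivity)]

open scoped MatrixOrder in
theorem integral_exp_neg_dotProduct_mulVec_div_two [DecidableEq ι] {M : Matrix ι ι ℝ}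
    (hM : M.PosDef) :
    ∫ ξ : ι → ℝ, exp (-(ξ ⬝ᵥ M *ᵥ ξ) / 2)
      = (2 * π) ^ ((Fintype.card ι : ℝ) / 2) * M.det ^ (-(1 : ℝ) / 2) := by
  set S := CFC.sqrt M
  have hS : S.IsSymm := isHermitian_iff_isSymm.mp (CFC.sqrt_nonneg M).posSemidef.1
  have hSS : S * S = M := CFC.sqrt_mul_sqrt_self M hM.posSemidef.nonneg
  have hdetM : M.det = S.det ^ 2 := by rw [← hSS, det_mul, sq]
  have hdetS : S.det ≠ 0 := fun h => hM.det_pos.ne' (by rw [hdetM, h, sq, zero_mul])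
  have hquad : ∀ ξ : ι → ℝ, ξ ⬝ᵥ M *ᵥ ξ = (S *ᵥ ξ) ⬝ᵥ (S *ᵥ ξ) := fun ξ => by
    rw [← hSS, ← mulVec_mulVec, ← dotProduct_transpose_mulVec, hS.eq, dotProduct_comm]
  have hpow : M.det ^ (-(1 : ℝ) / 2) = |S.det|⁻¹ := by
    rw [neg_div, rpow_neg hM.det_pos.le, ← sqrt_eq_rpow, hdetM, sqrt_sq_eq_abs]
  simp_rw [hquad]
  rw [integral_comp_mulVec hdetS (fun η => exp (-(η ⬝ᵥ η) / 2)),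
    integral_exp_neg_dotProduct_self_div_two, hpow, mul_comm]

theorem integral_exp_neg_dotProduct_mulVec_div_two_add [DecidableEq ι] {M : Matrix ι ι ℝ}
    (hM : M.PosDef) (b : ι → ℝ) :
    ∫ ξ : ι → ℝ, exp (-(ξ ⬝ᵥ M *ᵥ ξ) / 2 + b ⬝ᵥ ξ)
      = (2 * π) ^ ((Fintype.card ι : ℝ) / 2) * M.det ^ (-(1 : ℝ) / 2)
          * exp ((b ⬝ᵥ M⁻¹ *ᵥ b) / 2) := by
  have hMsymm : M.IsSymm := isHermitian_iff_isSymm.mp hM.1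
  set c := M⁻¹ *ᵥ b
  have hMc : M *ᵥ c = b := by
    rw [mulVec_mulVec, mul_nonsing_inv _ hM.det_pos.ne'.isUnit, one_mulVec]
  have hsquare : ∀ ξ : ι → ℝ, -(ξ ⬝ᵥ M *ᵥ ξ) / 2 + b ⬝ᵥ ξ
      = (b ⬝ᵥ c) / 2 + -((ξ - c) ⬝ᵥ M *ᵥ (ξ - c)) / 2 := fun ξ => by
    rw [hMsymm.sub_dotProduct_mulVec_sub, hMc, dotProduct_comm ξ b, dotProduct_comm c b]
    ring
  simp_rw [hsquare, exp_add, integral_const_mul]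
  rw [integral_sub_right_eq_self (fun ξ => exp (-(ξ ⬝ᵥ M *ᵥ ξ) / 2)) c,
    integral_exp_neg_dotProduct_mulVec_div_two hM]
  ring

end GaussianIntegral

theorem quadratic_exponent_comp_affine {R m n k : Type*} [CommRing R] [Fintype m] [Fintype n]
    [Fintype k] [DecidableEq m] {Ω : Matrix m m R} (hΩ : Ω.IsSymm) {N : Matrix n n R}
    (hN : N.IsSymm) (F : Matrix m n R) (A : Matrix m k R) (f lam : m → R) (z : k → R) :
    let a := f + A *ᵥ z
    let ε := lam - Ω *ᵥ f
    let K := 1 - Ω * F * N * Fᵀ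
    a ⬝ᵥ Ω *ᵥ a - 2 * (lam ⬝ᵥ a) - (Fᵀ *ᵥ (lam - Ω *ᵥ a)) ⬝ᵥ N *ᵥ (Fᵀ *ᵥ (lam - Ω *ᵥ a))
      = (f ⬝ᵥ Ω *ᵥ f - 2 * (lam ⬝ᵥ f) - (Fᵀ *ᵥ ε) ⬝ᵥ N *ᵥ (Fᵀ *ᵥ ε))
        + (z ⬝ᵥ (Aᵀ * K * Ω * A) *ᵥ z - 2 * ((Aᵀ *ᵥ (K *ᵥ ε)) ⬝ᵥ z)) := by
  dsimp only
  set ε := lam - Ω *ᵥ f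
  set K := 1 - Ω * F * N * Fᵀ
  set w := A *ᵥ z
  set u := Fᵀ *ᵥ ε
  set v := Fᵀ *ᵥ Ω *ᵥ w
  have hb : Fᵀ *ᵥ (lam - Ω *ᵥ (f + w)) = u - v := by
    rw [mulVec_add, ← sub_sub, ← mulVec_sub]
  have hquad : z ⬝ᵥ (Aᵀ * K * Ω * A) *ᵥ z = w ⬝ᵥ Ω *ᵥ w - v ⬝ᵥ N *ᵥ v := by
    rw [← mulVec_mulVec, ← mulVec_mulVec, ← mulVec_mulVec, dotProduct_transpose_mulVec,
      dotProduct_comm, sub_mulVec, one_mulVec, dotProduct_sub,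
      hΩ.dotProduct_mul_mul_mul_transpose_mulVec]
  have hlin : (Aᵀ *ᵥ (K *ᵥ ε)) ⬝ᵥ z = lam ⬝ᵥ w - f ⬝ᵥ Ω *ᵥ w - u ⬝ᵥ N *ᵥ v := by
    rw [dotProduct_comm, dotProduct_transpose_mulVec, dotProduct_comm, sub_mulVec, one_mulVec,
      dotProduct_sub, hΩ.dotProduct_mul_mul_mul_transpose_mulVec, dotProduct_sub,
      dotProduct_comm w, hΩ.dotProduct_mulVec_comm w, hN.dotProduct_mulVec_comm v]
  rw [hb, hquad, hlin, hΩ.add_dotProduct_mulVec_add, hN.sub_dotProduct_mulVec_sub,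
    dotProduct_add]
  ring

theorem integral_gaussian_mul_exp_quadratic_affine {m ι : Type*} [Fintype m] [Fintype ι]
    [DecidableEq ι] {Ω : Matrix m m ℝ} (hΩ : Ω.PosSemidef) (F : Matrix m ι ℝ) (a lam : m → ℝ) :
    ∫ ξ : ι → ℝ, ((2 * π) ^ (-(Fintype.card ι : ℝ) / 2) * exp (-(ξ ⬝ᵥ ξ) / 2)) *
        exp (-(1 / 2) * ((a + F *ᵥ ξ) ⬝ᵥ Ω *ᵥ (a + F *ᵥ ξ) - 2 * (lam ⬝ᵥ (a + F *ᵥ ξ))))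
      = (Fᵀ * Ω * F + 1).det ^ (-(1 : ℝ) / 2) *
          exp (-(1 / 2) * (a ⬝ᵥ Ω *ᵥ a - 2 * (lam ⬝ᵥ a)
            - (Fᵀ *ᵥ (lam - Ω *ᵥ a)) ⬝ᵥ (Fᵀ * Ω * F + 1)⁻¹ *ᵥ (Fᵀ *ᵥ (lam - Ω *ᵥ a)))) := by
  have hΩsymm : Ω.IsSymm := isHermitian_iff_isSymm.mp hΩ.1
  have hM := hΩ.posDef_transpose_mul_mul_add_one F
  set M := Fᵀ * Ω * F + 1
  set b := Fᵀ *ᵥ (lam - Ω *ᵥ a)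
  have hexponent : ∀ ξ : ι → ℝ,
      -(ξ ⬝ᵥ ξ) / 2 + -(1 / 2) * ((a + F *ᵥ ξ) ⬝ᵥ Ω *ᵥ (a + F *ᵥ ξ) - 2 * (lam ⬝ᵥ (a + F *ᵥ ξ)))
        = -(1 / 2) * (a ⬝ᵥ Ω *ᵥ a - 2 * (lam ⬝ᵥ a)) + (-(ξ ⬝ᵥ M *ᵥ ξ) / 2 + b ⬝ᵥ ξ) := by
    intro ξ
    have hMquad : ξ ⬝ᵥ M *ᵥ ξ = (F *ᵥ ξ) ⬝ᵥ Ω *ᵥ (F *ᵥ ξ) + ξ ⬝ᵥ ξ := by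
      rw [add_mulVec, one_mulVec, dotProduct_add, ← mulVec_mulVec, ← mulVec_mulVec,
        dotProduct_transpose_mulVec, dotProduct_comm]
    have hb_lin : b ⬝ᵥ ξ = lam ⬝ᵥ F *ᵥ ξ - a ⬝ᵥ Ω *ᵥ (F *ᵥ ξ) := by
      rw [dotProduct_comm, dotProduct_transpose_mulVec, sub_dotProduct, dotProduct_comm (Ω *ᵥ a),
        hΩsymm.dotProduct_mulVec_comm (F *ᵥ ξ)]
    rw [hΩsymm.add_dotProduct_mulVec_add, dotProduct_add, hMquad, hb_lin]
    ring
  have hnormalize : (2 * π) ^ (-(Fintype.card ι : ℝ) / 2) * (2 * π) ^ ((Fintype.card ι : ℝ) / 2)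
      = 1 := by
    rw [← rpow_add (by positivity), neg_div, neg_add_cancel, rpow_zero]
  have hintegrand : ∀ ξ : ι → ℝ,
      ((2 * π) ^ (-(Fintype.card ι : ℝ) / 2) * exp (-(ξ ⬝ᵥ ξ) / 2)) *
        exp (-(1 / 2) * ((a + F *ᵥ ξ) ⬝ᵥ Ω *ᵥ (a + F *ᵥ ξ) - 2 * (lam ⬝ᵥ (a + F *ᵥ ξ))))
      = ((2 * π) ^ (-(Fintype.card ι : ℝ) / 2) * exp (-(1 / 2) * (a ⬝ᵥ Ω *ᵥ a - 2 * (lam ⬝ᵥ a))))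
          * exp (-(ξ ⬝ᵥ M *ᵥ ξ) / 2 + b ⬝ᵥ ξ) := fun ξ => by
    rw [mul_assoc, ← exp_add, hexponent, exp_add, mul_assoc]
  simp_rw [hintegrand, integral_const_mul, integral_exp_neg_dotProduct_mulVec_div_two_add hM]
  calc _ = ((2 * π) ^ (-(Fintype.card ι : ℝ) / 2) * (2 * π) ^ ((Fintype.card ι : ℝ) / 2))
        * M.det ^ (-(1 : ℝ) / 2)
        * exp (-(1 / 2) * (a ⬝ᵥ Ω *ᵥ a - 2 * (lam ⬝ᵥ a)) + b ⬝ᵥ M⁻¹ *ᵥ b / 2) := by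
        rw [exp_add]; ring
    _ = _ := by rw [hnormalize, one_mul]; ring_nf

/-- Backward prediction step of the Rao-Blackwellized backward information filter
for the hierarchical CLG model: the linear state evolves as `z⁺ = f + A z + F ξ`
with `ξ` standard Gaussian. -/
theorem rbps_hier_backward_prediction
    (p n : ℕ) (f : Fin p → ℝ) (A : Matrix (Fin p) (Fin p) ℝ)
    (F : Matrix (Fin p) (Fin n) ℝ)
    (Ωhat : Matrix (Fin p) (Fin p) ℝ) (hΩ : Ωhat.PosSemidef)
    (lamHat : Fin p → ℝ) :
    let M : Matrix (Fin n) (Fin n) ℝ := Fᵀ * Ωhat * F + 1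
    let ε : Fin p → ℝ := lamHat - Ωhat.mulVec f
    let Ω' : Matrix (Fin p) (Fin p) ℝ := Aᵀ * (1 - Ωhat * F * M⁻¹ * Fᵀ) * Ωhat * A
    let lam' : Fin p → ℝ := Aᵀ.mulVec ((1 - Ωhat * F * M⁻¹ * Fᵀ).mulVec ε)
    let κ : ℝ := f ⬝ᵥ Ωhat.mulVec f - 2 * (lamHat ⬝ᵥ f)
        - (Fᵀ.mulVec ε) ⬝ᵥ (M⁻¹.mulVec (Fᵀ.mulVec ε))
    ∀ z : Fin p → ℝ,
      (∫ ξ : Fin n → ℝ,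
          ((2 * Real.pi) ^ (-(n : ℝ) / 2) * Real.exp (-(ξ ⬝ᵥ ξ) / 2)) *
            Real.exp (-(1 / 2) *
              ((f + A.mulVec z + F.mulVec ξ) ⬝ᵥ
                  Ωhat.mulVec (f + A.mulVec z + F.mulVec ξ)
                - 2 * (lamHat ⬝ᵥ (f + A.mulVec z + F.mulVec ξ)))))
        = M.det ^ (-(1 : ℝ) / 2) * Real.exp (-κ / 2) *
            Real.exp (-(1 / 2) * (z ⬝ᵥ Ω'.mulVec z - 2 * (lam' ⬝ᵥ z))) := by
  dsimp only
  intro z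
  have hΩsymm : Ωhat.IsSymm := isHermitian_iff_isSymm.mp hΩ.1
  have hMinv : (Fᵀ * Ωhat * F + 1)⁻¹.IsSymm :=
    (isHermitian_iff_isSymm.mp (hΩ.posDef_transpose_mul_mul_add_one F).1).inv
  have h := integral_gaussian_mul_exp_quadratic_affine hΩ F (f + A *ᵥ z) lamHat
  rw [Fintype.card_fin] at h
  rw [h, quadratic_exponent_comp_affine hΩsymm hMinv F A f lamHat z, mul_add, exp_add,
    ← mul_assoc]
  ring_nf
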